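/- arXiv:1905.02298 — 6 statements merged into one kernel-verified Lean document; each statement's English description precedes it below -/
import Mathlib

section
/- If p and q are both periods of a string X and p + q ≤ |X| + 1, then gcd(p, q) is also a period of X. -/
/-- `p` is a period of the string of length `n` represented by `f` (0-indexed):
`1 ≤ p ≤ n` and `f i = f (i + p)` whenever both positions are within the string. -/
def IsPeriod {α : Type*} (f : ℕ → α) (n p : ℕ) : Prop :=
  1 ≤ p ∧ p ≤ n ∧ ∀ i, i + p < n → f i = f (i + p)

lemma fw_step_mul {α : Type*} (f : ℕ → α) (n p : ℕ)
    (hper : ∀ i, i + p < n → f i = f (i + p)) :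
    ∀ k i, i + k * p < n → f i = f (i + k * p) := by
  intro k
  induction k with
  | zero => simp
  | succ k ih =>
    intro i h
    have hsm : (k + 1) * p = k * p + p := by rw [Nat.succ_mul]
    have h2 : i + p < n := by omega
    have h3 : i + p + k * p < n := by omega
    calc f i = f (i + p) := hper i h2
      _ = f (i + p + k * p) := ih (i + p) h3
      _ = f (i + (k + 1) * p) := by rw [show i + p + k * p = i + (k+1) * p by omega]

lemma fw_step_modeq {α : Type*} (f : ℕ → α) (n p : ℕ)
    (hper : ∀ i, i + p < n → f i = f (i + p)) :
    ∀ i j, i < n → j < n → i ≡ j [MOD p] → f i = f j := by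
  have key : ∀ i j, i ≤ j → j < n → i ≡ j [MOD p] → f i = f j := by
    intro i j hij hjn hmod
    obtain ⟨k, hk⟩ := (Nat.modEq_iff_dvd' hij).mp hmod
    have hj : j = i + k * p := by rw [Nat.mul_comm]; omega
    rw [hj] at hjn ⊢
    exact fw_step_mul f n p hper k i hjn
  intro i j hi hj hmod
  rcases le_total i j with h | h
  · exact key i j h hj hmod
  · exact (key j i h hi hmod.symm).symm

lemma fw_aux {α : Type*} : ∀ s p q n (f : ℕ → α), p + q = s → 1 ≤ q → q ≤ p → p ≤ n →
    p + q ≤ n + Nat.gcd p q →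
    (∀ i, i + p < n → f i = f (i + p)) →
    (∀ i, i + q < n → f i = f (i + q)) →
    ∀ i j, i < n → j < n → i ≡ j [MOD Nat.gcd p q] → f i = f j := by
  intro s
  induction s using Nat.strong_induction_on with
  | _ s ih =>
    intro p q n f hs hq1 hqp hpn hsum hperp hperq i j hi hj hmod
    by_cases hdvd : q ∣ p
    · rw [Nat.gcd_eq_right hdvd] at hmod
      exact fw_step_modeq f n q hperq i j hi hj hmod
    · set g := Nat.gcd p q with hg
      have hgq : g ∣ q := Nat.gcd_dvd_right p q
      have hgp : g ∣ p := Nat.gcd_dvd_left p q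
      have hg1 : 1 ≤ g := Nat.gcd_pos_of_pos_right p (by omega)
      have hqlt : q < p := lt_of_le_of_ne hqp (fun h => hdvd (h ▸ dvd_refl q))
      have hpq_g : q + g ≤ p := by
        have hd : g ∣ p - q := Nat.dvd_sub hgp hgq
        have h1 : g ≤ p - q := Nat.le_of_dvd (by omega) hd
        omega
      have h2q : 2 * q ≤ n := by omega
      set m := n - q with hm
      have hperq' : ∀ i, i + q < m → f i = f (i + q) := fun i h => hperq i (by omega)
      have hperpq : ∀ i, i + (p - q) < m → f i = f (i + (p - q)) := by
        intro i h
        have h1 : i + p < n := by omega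
        calc f i = f (i + p) := hperp i h1
          _ = f (i + (p - q) + q) := by rw [show i + (p - q) + q = i + p by omega]
          _ = f (i + (p - q)) := (hperq _ (by omega)).symm
      have hgcd' : Nat.gcd (p - q) q = g := Nat.gcd_sub_self_left hqp
      have reduce : ∀ a, a < n → ∃ a', a' < m ∧ f a' = f a ∧ a' ≡ a [MOD g] := by
        intro a ha
        by_cases h : a < m
        · exact ⟨a, h, rfl, Nat.ModEq.refl _⟩
        · refine ⟨a - q, by omega, ?_, ?_⟩
          · have := hperq (a - q) (by omega)
            rw [show a - q + q = a by omega] at this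
            exact this
          · exact (Nat.modEq_iff_dvd' (by omega)).mpr
              (by rw [show a - (a - q) = q by omega]; exact hgq)
      obtain ⟨i', hi'm, hfi, hmi⟩ := reduce i hi
      obtain ⟨j', hj'm, hfj, hmj⟩ := reduce j hj
      rw [← hfi, ← hfj]
      have hmod' : i' ≡ j' [MOD g] := hmi.trans (hmod.trans hmj.symm)
      rcases le_total q (p - q) with hle | hle
      · exact ih p (by omega) (p - q) q m f (by omega) hq1 hle (by omega)
          (by rw [hgcd']; omega) hperpq hperq' i' j' hi'm hj'm (by rwa [hgcd'])
      · have hgcd'' : Nat.gcd q (p - q) = g := by rw [Nat.gcd_comm, hgcd']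
        exact ih p (by omega) q (p - q) m f (by omega) (by omega) hle (by omega)
          (by rw [hgcd'']; omega) hperq' hperpq i' j' hi'm hj'm (by rwa [hgcd''])

/-- **Fine–Wilf periodicity lemma**: if `p` and `q` are both periods of a string `X`
of length `n` and `p + q ≤ n + 1`, then `gcd(p, q)` is also a period of `X`. -/
theorem fine_wilf {α : Type*} (f : ℕ → α) (n p q : ℕ)
    (hp : IsPeriod f n p) (hq : IsPeriod f n q) (hpq : p + q ≤ n + 1) :
    IsPeriod f n (Nat.gcd p q) := by
  obtain ⟨hp1, hpn, hperp⟩ := hp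
  obtain ⟨hq1, hqn, hperq⟩ := hq
  have hd1 : 1 ≤ Nat.gcd p q := Nat.gcd_pos_of_pos_left q hp1
  have hdp : Nat.gcd p q ≤ p := Nat.le_of_dvd (by omega) (Nat.gcd_dvd_left p q)
  refine ⟨hd1, by omega, fun i h => ?_⟩
  have hmod : i ≡ i + Nat.gcd p q [MOD Nat.gcd p q] :=
    (Nat.modEq_iff_dvd' (by omega)).mpr (by simp)
  rcases le_total q p with hle | hle
  · exact fw_aux (p + q) p q n f rfl hq1 hle hpn (by omega) hperp hperq
      i (i + Nat.gcd p q) (by omega) h hmod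
  · have := fw_aux (q + p) q p n f rfl hp1 hle hqn (by rw [Nat.gcd_comm]; omega)
      hperq hperp i (i + Nat.gcd p q) (by omega) h (by rwa [Nat.gcd_comm q p])
    exact this
end

section
/- Let W be a string and a, b letters. If per(aW) ≤ |aW|/4 and per(Wb) ≤ |Wb|/4, then per(aW) = per(Wb). -/
/-- `per f n` is the smallest period of the string of length `n` represented by `f`. -/
noncomputable def per {α : Type*} (f : ℕ → α) (n : ℕ) : ℕ :=
  sInf {p | IsPeriod f n p}

private lemma period_mul {α : Type*} (f : ℕ → α) (n g : ℕ)
    (hg : ∀ i, i + g < n → f i = f (i + g)) :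
    ∀ k i, i + g * k < n → f i = f (i + g * k) := by
  intro k
  induction k with
  | zero => simp
  | succ k ih =>
    intro i hi
    rw [Nat.mul_succ] at hi ⊢
    have h1 : i + g * k < n := by omega
    rw [ih i h1, ← Nat.add_assoc]
    exact hg (i + g * k) (by omega)

private lemma fine_wilf_aux {α : Type*} :
    ∀ m (f : ℕ → α) (n p q : ℕ), p + q ≤ m → 1 ≤ p → p ≤ q → p + q ≤ n →
    (∀ i, i + p < n → f i = f (i + p)) → (∀ i, i + q < n → f i = f (i + q)) →
    ∀ i, i + Nat.gcd p q < n → f i = f (i + Nat.gcd p q) := by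
  intro m
  induction m with
  | zero => intro f n p q h hp hq; omega
  | succ m ih =>
    intro f n p q hm hp hpq hn hfp hfq
    rcases eq_or_lt_of_le hpq with h | h
    · subst h
      rw [Nat.gcd_self]
      exact fun i hi => hfp i hi
    · -- p < q
      have hr1 : 1 ≤ q - p := by omega
      have hfp' : ∀ i, i + p < n - p → f i = f (i + p) := fun i hi => hfp i (by omega)
      have hfr : ∀ i, i + (q - p) < n - p → f i = f (i + (q - p)) := by
        intro i hi
        have h1 : f i = f (i + q) := hfq i (by omega)
        have h2 : f (i + (q - p)) = f (i + (q - p) + p) := hfp _ (by omega)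
        rw [h1, h2]
        congr 1
        omega
      have hgcd : Nat.gcd p (q - p) = Nat.gcd p q := by
        conv_rhs => rw [show q = (q - p) + p by omega]
        rw [Nat.gcd_add_self_right]
      have key : ∀ i, i + Nat.gcd p q < n - p → f i = f (i + Nat.gcd p q) := by
        rcases le_total p (q - p) with hc | hc
        · intro i hi
          rw [← hgcd] at hi ⊢
          exact ih f (n - p) p (q - p) (by omega) hp hc (by omega) hfp' hfr i hi
        · intro i hi
          rw [← hgcd, Nat.gcd_comm] at hi ⊢
          exact ih f (n - p) (q - p) p (by omega) hr1 hc (by omega) hfr hfp' i hi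
      set g := Nat.gcd p q with hgdef
      have hg1 : 1 ≤ g := Nat.pos_of_ne_zero (by
        intro h0
        have := Nat.eq_zero_of_gcd_eq_zero_left h0
        omega)
      have hgdvd : g ∣ q - p := (Nat.dvd_sub (Nat.gcd_dvd_right p q) (Nat.gcd_dvd_left p q))
      have hgle : g ≤ q - p := Nat.le_of_dvd (by omega) hgdvd
      intro i hi
      by_cases hcase : i + g < n - p
      · exact key i hcase
      · have hip : p ≤ i := by omega
        have e1 : f (i - p) = f i := by
          have := hfp (i - p) (by omega)
          rw [this]
          congr 1
          omega
        have e2 : f (i - p + g) = f (i + g) := by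
          have := hfp (i - p + g) (by omega)
          rw [this]
          congr 1
          omega
        rw [← e1, ← e2]
        exact key (i - p) (by omega)

private lemma fine_wilf_s1 {α : Type*} (f : ℕ → α) (n p q : ℕ) (hp : 1 ≤ p) (hq : 1 ≤ q)
    (hn : p + q ≤ n)
    (hfp : ∀ i, i + p < n → f i = f (i + p)) (hfq : ∀ i, i + q < n → f i = f (i + q)) :
    ∀ i, i + Nat.gcd p q < n → f i = f (i + Nat.gcd p q) := by
  rcases le_total p q with h | h
  · exact fine_wilf_aux (p + q) f n p q le_rfl hp h hn hfp hfq
  · intro i hi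
    rw [Nat.gcd_comm] at hi ⊢
    exact fine_wilf_aux (q + p) f n q p le_rfl hq h (by omega) hfq hfp i hi

/-- Let `W` be a string (of length `n`) and `a, b` letters. If
`per(aW) ≤ |aW|/4` and `per(Wb) ≤ |Wb|/4`, then `per(aW) = per(Wb)`.
(Here `|aW| = |Wb| = n + 1`, and `per(X) ≤ |X|/4` is stated as `4 * per(X) ≤ |X|`.) -/
theorem per_prepend_eq_per_append {α : Type*} (W : ℕ → α) (n : ℕ) (a b : α)
    (aW Wb : ℕ → α)
    (haW0 : aW 0 = a) (haW : ∀ k, aW (k + 1) = W k)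
    (hWb : ∀ k, k < n → Wb k = W k) (hWbn : Wb n = b)
    (h1 : 4 * per aW (n + 1) ≤ n + 1)
    (h2 : 4 * per Wb (n + 1) ≤ n + 1) :
    per aW (n + 1) = per Wb (n + 1) := by
  have hne1 : {p | IsPeriod aW (n + 1) p}.Nonempty :=
    ⟨n + 1, ⟨by omega, le_rfl, fun i hi => absurd hi (by omega)⟩⟩
  have hne2 : {p | IsPeriod Wb (n + 1) p}.Nonempty :=
    ⟨n + 1, ⟨by omega, le_rfl, fun i hi => absurd hi (by omega)⟩⟩
  have hp : IsPeriod aW (n + 1) (per aW (n + 1)) := Nat.sInf_mem hne1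
  have hq : IsPeriod Wb (n + 1) (per Wb (n + 1)) := Nat.sInf_mem hne2
  set p := per aW (n + 1) with hpdef
  set q := per Wb (n + 1) with hqdef
  obtain ⟨hp1, hpn, hpper⟩ := hp
  obtain ⟨hq1, hqn, hqper⟩ := hq
  -- W has periods p and q on length n
  have hWp : ∀ i, i + p < n → W i = W (i + p) := by
    intro i hi
    rw [← haW i, ← haW (i + p)]
    have := hpper (i + 1) (by omega)
    convert this using 2
    omega
  have hWq : ∀ i, i + q < n → W i = W (i + q) := by
    intro i hi
    rw [← hWb i (by omega), ← hWb (i + q) (by omega)]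
    exact hqper i (by omega)
  have hsum : p + q ≤ n := by omega
  set g := Nat.gcd p q with hgdef
  have hWg : ∀ i, i + g < n → W i = W (i + g) := fine_wilf_s1 W n p q hp1 hq1 hsum hWp hWq
  have hg1 : 1 ≤ g := Nat.pos_of_ne_zero (by
    intro h0
    have := Nat.eq_zero_of_gcd_eq_zero_left h0
    omega)
  have hgp : g ∣ p := Nat.gcd_dvd_left p q
  have hgq : g ∣ q := Nat.gcd_dvd_right p q
  have hglep : g ≤ p := Nat.le_of_dvd (by omega) hgp
  have hgleq : g ≤ q := Nat.le_of_dvd (by omega) hgq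
  have hWmul := period_mul W n g hWg
  -- g is a period of aW on n+1
  have hgaW : IsPeriod aW (n + 1) g := by
    refine ⟨hg1, by omega, fun i hi => ?_⟩
    rcases i with _ | j
    · -- aW 0 = aW g
      have e1 : aW 0 = aW p := by
        have := hpper 0 (by omega)
        rwa [Nat.zero_add] at this
      have e2 : aW p = W (p - 1) := by
        have := haW (p - 1)
        rw [← this]
        congr 1
        omega
      have e3 : aW g = W (g - 1) := by
        have := haW (g - 1)
        rw [← this]
        congr 1
        omega
      obtain ⟨k, hk⟩ := hgp
      rcases k with _ | k
      · omega
      have e4 : W (g - 1) = W (g - 1 + g * k) := hWmul k (g - 1) (by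
        have : g * (k + 1) = p := hk.symm
        rw [Nat.mul_succ] at this
        omega)
      have e5 : g - 1 + g * k = p - 1 := by
        have : g * (k + 1) = p := hk.symm
        rw [Nat.mul_succ] at this
        omega
      rw [e1, e2, Nat.zero_add, e3, e4, e5]
    · have e1 : aW (j + 1) = W j := haW j
      have e2 : aW (j + 1 + g) = W (j + g) := by
        have := haW (j + g)
        rw [← this]
        congr 1
        omega
      rw [e1, e2]
      exact hWg j (by omega)
  -- g is a period of Wb on n+1
  have hgWb : IsPeriod Wb (n + 1) g := by
    refine ⟨hg1, by omega, fun i hi => ?_⟩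
    by_cases hc : i + g < n
    · rw [hWb i (by omega), hWb (i + g) hc]
      exact hWg i hc
    · have hin : i + g = n := by omega
      have e1 : Wb (n - q) = Wb n := by
        have := hqper (n - q) (by omega)
        rw [this]
        congr 1
        omega
      obtain ⟨k, hk⟩ := Nat.dvd_sub hgq (dvd_refl g)
      -- q - g = g * k
      have e2 : W (n - q) = W (n - q + g * k) := hWmul k (n - q) (by omega)
      have e3 : n - q + g * k = n - g := by omega
      have e4 : Wb i = W (n - g) := by
        rw [hWb i (by omega)]
        congr 1
        omega
      rw [e4, ← e3, ← e2, ← hWb (n - q) (by omega), e1, hin]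
  have hple : p ≤ g := Nat.sInf_le hgaW
  have hqle : q ≤ g := Nat.sInf_le hgWb
  omega
end

section
/- Let S be a string and ℓ a positive integer with ℓ ≤ |S|. If every length-ℓ substring of S has period at most ℓ/4, i.e., per(S[j..j+ℓ-1]) ≤ ℓ/4 for every valid j, then per(S) ≤ ℓ/4. -/
/-- The substring of `f` starting at position `i` (0-indexed). -/
def sub {α : Type*} (f : ℕ → α) (i : ℕ) : ℕ → α := fun k => f (i + k)

lemma isPeriod_refl {α : Type*} (f : ℕ → α) {n : ℕ} (hn : 1 ≤ n) : IsPeriod f n n :=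
  ⟨hn, le_refl _, fun i hi => absurd hi (by omega)⟩

lemma isPeriod_mono {α : Type*} {f : ℕ → α} {n m p : ℕ} (h : IsPeriod f n p)
    (hp : p ≤ m) (hm : m ≤ n) : IsPeriod f m p :=
  ⟨h.1, hp, fun i hi => h.2.2 i (lt_of_lt_of_le hi hm)⟩

lemma isPeriod_iterate {α : Type*} {f : ℕ → α} {n d : ℕ} (h : IsPeriod f n d) :
    ∀ k x, x + k * d < n → f x = f (x + k * d) := by
  intro k
  induction k with
  | zero => intro x _; simp
  | succ k ih =>
    intro x hx
    have hd := h.1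
    have e1 : f x = f (x + k * d) := ih x (by nlinarith [Nat.succ_mul k d])
    have e2 : f (x + k * d) = f (x + k * d + d) := h.2.2 _ (by
      have : x + k * d + d = x + (k + 1) * d := by ring
      omega)
    rw [e1, e2]; congr 1; ring

lemma isPeriod_step {α : Type*} {f : ℕ → α} {n d x y : ℕ} (h : IsPeriod f n d)
    (hxy : x ≤ y) (hd : d ∣ y - x) (hy : y < n) : f x = f y := by
  obtain ⟨k, hk⟩ := hd
  have hyx : y = x + k * d := by rw [Nat.mul_comm]; omega
  rw [hyx]
  exact isPeriod_iterate h k x (by omega)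

lemma extend_period {α : Type*} {f : ℕ → α} {m m0 p d : ℕ}
    (hd : IsPeriod f m0 d) (hp : IsPeriod f m p) (h1 : p + d ≤ m0) (h2 : m0 ≤ m) :
    IsPeriod f m d := by
  refine ⟨hd.1, le_trans hd.2.1 h2, ?_⟩
  intro i
  induction i using Nat.strong_induction_on with
  | _ i ih =>
    intro hi
    by_cases hc : i + d < m0
    · exact hd.2.2 i hc
    · have hip : p ≤ i := by omega
      have e1 : f (i - p) = f i := by
        have := hp.2.2 (i - p) (by omega)
        rwa [Nat.sub_add_cancel hip] at this
      have e2 : f (i + d - p) = f (i + d) := by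
        have := hp.2.2 (i + d - p) (by omega)
        rwa [Nat.sub_add_cancel (by omega)] at this
      have e3 : f (i - p) = f (i - p + d) := ih (i - p) (by have := hp.1; omega) (by omega)
      rw [← e1, e3, show i - p + d = i + d - p by omega, e2]

lemma fine_wilf_s2 {α : Type*} {f : ℕ → α} :
    ∀ s p q m, p + q ≤ s → IsPeriod f m p → IsPeriod f m q → p + q ≤ m →
      IsPeriod f m (Nat.gcd p q) := by
  intro s
  induction s with
  | zero => intro p q m hs hp _ _; exact absurd hp.1 (by omega)
  | succ s ih =>
    intro p q m hs hp hq hpq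
    have hp1 := hp.1
    have hq1 := hq.1
    rcases lt_trichotomy p q with hlt | heq | hgt
    · have hq' : IsPeriod f (m - p) (q - p) := by
        refine ⟨by omega, by omega, fun i hi => ?_⟩
        have e1 : f i = f (i + q) := hq.2.2 i (by omega)
        have e2 : f (i + (q - p)) = f (i + q) := by
          have := hp.2.2 (i + (q - p)) (by omega)
          rwa [show i + (q - p) + p = i + q by omega] at this
        rw [e1, e2]
      have hp' : IsPeriod f (m - p) p := isPeriod_mono hp (by omega) (by omega)
      have hd := ih p (q - p) (m - p) (by omega) hp' hq' (by omega)
      rw [Nat.gcd_sub_self_right (le_of_lt hlt)] at hd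
      have hdle : Nat.gcd p q ≤ q - p := Nat.le_of_dvd (by omega)
        (Nat.dvd_sub (Nat.gcd_dvd_right p q) (Nat.gcd_dvd_left p q))
      exact extend_period hd hp (by omega) (by omega)
    · rw [heq, Nat.gcd_self]; exact hq
    · have hp' : IsPeriod f (m - q) (p - q) := by
        refine ⟨by omega, by omega, fun i hi => ?_⟩
        have e1 : f i = f (i + p) := hp.2.2 i (by omega)
        have e2 : f (i + (p - q)) = f (i + p) := by
          have := hq.2.2 (i + (p - q)) (by omega)
          rwa [show i + (p - q) + q = i + p by omega] at this
        rw [e1, e2]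
      have hq' : IsPeriod f (m - q) q := isPeriod_mono hq (by omega) (by omega)
      have hd := ih (p - q) q (m - q) (by omega) hp' hq' (by omega)
      rw [Nat.gcd_comm, Nat.gcd_sub_self_right (le_of_lt hgt), Nat.gcd_comm] at hd
      have hdle : Nat.gcd p q ≤ p - q := Nat.le_of_dvd (by omega)
        (Nat.dvd_sub (Nat.gcd_dvd_left p q) (Nat.gcd_dvd_right p q))
      exact extend_period hd hq (by omega) (by omega)

/-- If every length-`ℓ` substring of a string `S` of length `n` has period at most
`ℓ/4` (stated as `4 * per ≤ ℓ`), then `per(S) ≤ ℓ/4`. -/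
theorem per_of_all_substrings_periodic {α : Type*} (f : ℕ → α) (n ℓ : ℕ)
    (hℓ : 1 ≤ ℓ) (hn : ℓ ≤ n)
    (h : ∀ j, j + ℓ ≤ n → 4 * per (sub f j) ℓ ≤ ℓ) :
    4 * per f n ≤ ℓ := by
  have hne : ∀ j : ℕ, {p | IsPeriod (sub f j) ℓ p}.Nonempty :=
    fun j => ⟨ℓ, isPeriod_refl _ hℓ⟩
  have hmem : ∀ j : ℕ, IsPeriod (sub f j) ℓ (per (sub f j) ℓ) :=
    fun j => Nat.sInf_mem (hne j)
  -- step: consecutive windows have the same smallest period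
  have step : ∀ j, j + 1 + ℓ ≤ n → per (sub f j) ℓ = per (sub f (j + 1)) ℓ := by
    intro j hj
    set P := per (sub f j) ℓ with hPdef
    set Q := per (sub f (j + 1)) ℓ with hQdef
    have hP : IsPeriod (sub f j) ℓ P := hmem j
    have hQ : IsPeriod (sub f (j + 1)) ℓ Q := hmem (j + 1)
    have h4P : 4 * P ≤ ℓ := h j (by omega)
    have h4Q : 4 * Q ≤ ℓ := h (j + 1) hj
    have hP1 : 1 ≤ P := hP.1
    have hQ1 : 1 ≤ Q := hQ.1
    have hℓ4 : 4 ≤ ℓ := by omega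
    set g := sub f (j + 1) with hgdef
    -- P is a period of the overlap g of length ℓ - 1
    have hPg : IsPeriod g (ℓ - 1) P := by
      refine ⟨hP1, by omega, fun i hi => ?_⟩
      have := hP.2.2 (i + 1) (by omega)
      simp only [sub] at this
      show f (j + 1 + i) = f (j + 1 + (i + P))
      rw [show j + 1 + i = j + (i + 1) by omega, show j + 1 + (i + P) = j + (i + 1 + P) by omega]
      exact this
    have hQg : IsPeriod g (ℓ - 1) Q := isPeriod_mono hQ (by omega) (by omega)
    have hd : IsPeriod g (ℓ - 1) (Nat.gcd P Q) :=
      fine_wilf_s2 (P + Q) P Q (ℓ - 1) le_rfl hPg hQg (by omega)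
    set d := Nat.gcd P Q with hddef
    have hd1 : 1 ≤ d := hd.1
    have hdP : d ∣ P := Nat.gcd_dvd_left P Q
    have hdQ : d ∣ Q := Nat.gcd_dvd_right P Q
    have hdleP : d ≤ P := Nat.le_of_dvd (by omega) hdP
    have hdleQ : d ≤ Q := Nat.le_of_dvd (by omega) hdQ
    -- d is a period of window j
    have claim1 : IsPeriod (sub f j) ℓ d := by
      refine ⟨hd1, by omega, fun i hi => ?_⟩
      match i with
      | 0 =>
        show f (j + 0) = f (j + (0 + d))
        have e1 : f (j + 0) = f (j + (0 + P)) := hP.2.2 0 (by omega)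
        have e2 : g (d - 1) = g (P - 1) :=
          isPeriod_step hd (by omega)
            (by rw [show P - 1 - (d - 1) = P - d by omega]
                exact Nat.dvd_sub hdP (dvd_refl d))
            (by omega)
        rw [hgdef] at e2
        simp only [sub] at e2
        rw [e1, show j + (0 + P) = j + 1 + (P - 1) by omega, ← e2,
          show j + 1 + (d - 1) = j + (0 + d) by omega]
      | (k + 1) =>
        have e : g k = g (k + d) := hd.2.2 k (by omega)
        rw [hgdef] at e
        simp only [sub] at e
        show f (j + (k + 1)) = f (j + (k + 1 + d))
        rw [show j + (k + 1) = j + 1 + k by omega, e,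
          show j + 1 + (k + d) = j + (k + 1 + d) by omega]
    -- d is a period of window j+1
    have claim2 : IsPeriod g ℓ d := by
      refine ⟨hd1, by omega, fun i hi => ?_⟩
      by_cases hc : i + d < ℓ - 1
      · exact hd.2.2 i hc
      · have hieq : i + d = ℓ - 1 := by omega
        have e1 : g (ℓ - 1 - Q) = g (ℓ - 1) := by
          have := hQ.2.2 (ℓ - 1 - Q) (by omega)
          rwa [show ℓ - 1 - Q + Q = ℓ - 1 by omega] at this
        have e2 : g (ℓ - 1 - Q) = g (ℓ - 1 - d) := by
          refine isPeriod_step hd (by omega) ?_ (by omega)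
          rw [show ℓ - 1 - d - (ℓ - 1 - Q) = Q - d by omega]
          exact Nat.dvd_sub hdQ (dvd_refl d)
        rw [show i = ℓ - 1 - d by omega, show ℓ - 1 - d + d = ℓ - 1 by omega, ← e1]
        exact e2.symm
    have hPd : P ≤ d := Nat.sInf_le claim1
    have hQd : Q ≤ d := Nat.sInf_le claim2
    omega
  -- all windows have the same smallest period
  have chain : ∀ j, j + ℓ ≤ n → per (sub f j) ℓ = per (sub f 0) ℓ := by
    intro j
    induction j with
    | zero => intro _; rfl
    | succ j ih => intro hj; rw [← step j (by omega)]; exact ih (by omega)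
  set P := per (sub f 0) ℓ with hPdef
  have hP : IsPeriod (sub f 0) ℓ P := hmem 0
  have h4P : 4 * P ≤ ℓ := h 0 (by omega)
  have hP1 : 1 ≤ P := hP.1
  have hℓ4 : 4 ≤ ℓ := by omega
  -- P is a period of the whole string
  have hglobal : IsPeriod f n P := by
    refine ⟨hP1, by omega, fun i hi => ?_⟩
    by_cases hc : i + ℓ ≤ n
    · have hj : per (sub f i) ℓ = P := chain i hc
      have := (hmem i).2.2 0 (by rw [hj]; omega)
      rw [hj] at this
      simp only [sub] at this
      rw [show i + 0 = i by omega, show i + (0 + P) = i + P by omega] at this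
      exact this
    · set j := n - ℓ with hjdef
      have hj : per (sub f j) ℓ = P := chain j (by omega)
      have := (hmem j).2.2 (i - j) (by rw [hj]; omega)
      rw [hj] at this
      simp only [sub] at this
      rw [show j + (i - j) = i by omega, show j + (i - j + P) = i + P by omega] at this
      exact this
  have : per f n ≤ P := Nat.sInf_le hglobal
  omega
end

section
/- Let S be a string and ℓ a positive integer. Any two distinct maximal ℓ-periodic substrings of S overlap in fewer than ℓ/2 positions. -/
/-- The substring `S[i..j]` (0-indexed, inclusive) is `ℓ`-periodic:
its length `j - i + 1` is at least `ℓ` and its smallest period is at most `ℓ/4`. -/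
def LPeriodicSub {α : Type*} (f : ℕ → α) (ℓ i j : ℕ) : Prop :=
  ℓ ≤ j - i + 1 ∧ 4 * per (sub f i) (j - i + 1) ≤ ℓ

/-- The substring `S[i..j]` of the string of length `n` is a *maximal* `ℓ`-periodic
substring: it is `ℓ`-periodic and cannot be extended to the left or right while
keeping period at most `ℓ/4`. -/
def MaximalLPeriodicSub {α : Type*} (f : ℕ → α) (n ℓ i j : ℕ) : Prop :=
  i ≤ j ∧ j < n ∧ LPeriodicSub f ℓ i j ∧
  (i = 0 ∨ ℓ < 4 * per (sub f (i - 1)) (j - (i - 1) + 1)) ∧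
  (j = n - 1 ∨ ℓ < 4 * per (sub f i) (j + 1 - i + 1))

/-- The smallest period is an actual period, provided the length is positive. -/
lemma per_isPeriod {α : Type*} (f : ℕ → α) (m : ℕ) (hm : 1 ≤ m) :
    IsPeriod f m (per f m) := by
  have hne : {p | IsPeriod f m p}.Nonempty :=
    ⟨m, hm, le_rfl, fun i hi => absurd hi (by omega)⟩
  exact Nat.sInf_mem hne

/-- Any two distinct maximal `ℓ`-periodic substrings of the same string `S`
(with `i < i' ≤ j < j'`) overlap in fewer than `ℓ/2` positions, i.e.,
`2 * (j - i' + 1) < ℓ`. -/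
theorem maximal_periodic_overlap {α : Type*} (f : ℕ → α) (n ℓ i j i' j' : ℕ)
    (hℓ : 0 < ℓ)
    (h1 : MaximalLPeriodicSub f n ℓ i j) (h2 : MaximalLPeriodicSub f n ℓ i' j')
    (hii' : i < i') (hi'j : i' ≤ j) (hjj' : j < j') :
    2 * (j - i' + 1) < ℓ := by
  by_contra hcon
  push_neg at hcon
  obtain ⟨hij, hjn, ⟨hlen1, hper1⟩, _, hmax1⟩ := h1
  obtain ⟨hij', hjn', ⟨hlen2, hper2⟩, _, _⟩ := h2
  set p := per (sub f i) (j - i + 1) with hp_def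
  set p' := per (sub f i') (j' - i' + 1) with hp'_def
  have hpP : IsPeriod (sub f i) (j - i + 1) p := per_isPeriod _ _ (by omega)
  have hp'P : IsPeriod (sub f i') (j' - i' + 1) p' := per_isPeriod _ _ (by omega)
  obtain ⟨hp1, hp2, hp3⟩ := hpP
  obtain ⟨hp'1, hp'2, hp'3⟩ := hp'P
  -- absolute-position versions of the two periodicities
  have hP : ∀ x, i ≤ x → x + p ≤ j → f x = f (x + p) := by
    intro x hx1 hx2
    have := hp3 (x - i) (by omega)
    simp only [sub] at this
    have e1 : i + (x - i) = x := by omega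
    have e2 : i + (x - i + p) = x + p := by omega
    rwa [e1, e2] at this
  have hP' : ∀ x, i' ≤ x → x + p' ≤ j' → f x = f (x + p') := by
    intro x hx1 hx2
    have := hp'3 (x - i') (by omega)
    simp only [sub] at this
    have e1 : i' + (x - i') = x := by omega
    have e2 : i' + (x - i' + p') = x + p' := by omega
    rwa [e1, e2] at this
  -- overlap is long: p + p' fit inside it
  have hfit : i' + p + p' ≤ j + 1 := by omega
  obtain ⟨a, ha1, ha2⟩ : ∃ a, i' ≤ a ∧ a + p + p' = j + 1 :=
    ⟨j + 1 - p - p', by omega, by omega⟩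
  -- the key new equality: f (j+1-p) = f (j+1), expressed as a + p' vs a + p + p'
  have key : f (a + p') = f (a + p + p') := by
    have e1 : f a = f (a + p') := hP' a ha1 (by omega)
    have e2 : f a = f (a + p) := hP a (by omega) (by omega)
    have e3 : f (a + p) = f (a + p + p') := hP' (a + p) (by omega) (by omega)
    rw [← e1, e2, e3]
  -- hence p is a period of the extended substring S[i..j+1]
  have hext : IsPeriod (sub f i) (j + 1 - i + 1) p := by
    refine ⟨hp1, by omega, ?_⟩
    intro k hk
    show f (i + k) = f (i + (k + p))
    rcases Nat.lt_or_ge (i + k + p) (j + 1) with h | h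
    · have := hP (i + k) (by omega) (by omega)
      rwa [add_assoc] at this
    · have h1 : i + k = a + p' := by omega
      have h2 : i + (k + p) = a + p + p' := by omega
      rw [h1, h2]; exact key
  have hle : per (sub f i) (j + 1 - i + 1) ≤ p := Nat.sInf_le hext
  rcases hmax1 with h | h
  · omega
  · omega
end

section
/- Let T be an ℓ-periodic string, i.e., |T| ≥ ℓ and p = per(T) ≤ ℓ/4. Let R be the lexicographically smallest cyclic rotation of T[1..p]. Then T can be written as T = R[i..|R|] · R^α · R[1..j] for some i, j ∈ [1, |R|] and some integer α ≥ 2. -/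
/-- `p` is a period of the list `T`: `1 ≤ p ≤ |T|` and `T[i] = T[i+p]` whenever both
positions are in range. -/
def IsPeriodL {α : Type*} (T : List α) (p : ℕ) : Prop :=
  1 ≤ p ∧ p ≤ T.length ∧ ∀ i (h : i + p < T.length),
    T[i]'(Nat.lt_of_le_of_lt (Nat.le_add_right i p) h) = T[i + p]'h

/-- `perL T` is the smallest period of `T`. -/
noncomputable def perL {α : Type*} (T : List α) : ℕ :=
  sInf {p | IsPeriodL T p}

private lemma geq {α : Type*} (l : List α) {i j : ℕ} (hij : i = j) (hi : i < l.length)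
    (hj : j < l.length) : l[i] = l[j] := by subst hij; rfl

private lemma geq' {α : Type*} {l l' : List α} (h : l = l') {n : ℕ} (hn : n < l.length)
    (hn' : n < l'.length) : l[n] = l'[n] := by subst h; rfl

private lemma flat_rep_len {α : Type*} (R : List α) (b : ℕ) :
    (List.replicate b R).flatten.length = b * R.length := by
  induction b with
  | zero => simp
  | succ b ih => rw [List.replicate_succ, List.flatten_cons, List.length_append, ih]; ring

private lemma flat_rep_get {α : Type*} (R : List α) (hR : 0 < R.length) (b n : ℕ)
    (h : n < b * R.length) :
    (List.replicate b R).flatten[n]'(by rw [flat_rep_len]; exact h) =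
      R[n % R.length]'(Nat.mod_lt _ hR) := by
  induction b generalizing n with
  | zero => omega
  | succ b ih =>
    have hsplit : (List.replicate (b+1) R).flatten = R ++ (List.replicate b R).flatten := by
      rw [List.replicate_succ, List.flatten_cons]
    rw [geq' hsplit (by rw [flat_rep_len]; exact h)
      (by rw [List.length_append, flat_rep_len]; rw [Nat.succ_mul] at h; omega)]
    by_cases hn : n < R.length
    · rw [List.getElem_append_left hn]
      exact geq _ (Nat.mod_eq_of_lt hn).symm _ _
    · push_neg at hn
      have h2 : n - R.length < b * R.length := by
        rw [Nat.succ_mul] at h; omega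
      rw [List.getElem_append_right hn, ih _ h2]
      exact geq _ (Nat.mod_eq_sub_mod hn).symm _ _

/-- Let `T` be an `ℓ`-periodic string: `|T| ≥ ℓ` and `p = per(T) ≤ ℓ/4`.
Let `R` be the lexicographically smallest cyclic rotation of `T[1..p]`.
Then `T = R[i..|R|] · R^α · R[1..j]` for some `i, j ∈ [1, |R|]` and some `α ≥ 2`. -/
theorem root_decomposition {α : Type*} [LinearOrder α] (T R : List α) (ℓ : ℕ)
    (hℓ : 0 < ℓ) (hlen : ℓ ≤ T.length) (hper : 4 * perL T ≤ ℓ)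
    (hrot : ∃ k, k < perL T ∧ R = (T.take (perL T)).rotate k)
    (hmin : ∀ k, k < perL T → ¬ List.Lex (· < ·) ((T.take (perL T)).rotate k) R) :
    ∃ i j a : ℕ, 1 ≤ i ∧ i ≤ R.length ∧ 1 ≤ j ∧ j ≤ R.length ∧ 2 ≤ a ∧
      T = R.drop (i - 1) ++ (List.replicate a R).flatten ++ R.take j := by
  obtain ⟨k, hk, hR⟩ := hrot
  obtain ⟨p, hpdef⟩ : ∃ p, perL T = p := ⟨_, rfl⟩
  rw [hpdef] at hk hR hper
  have hTlen : 1 ≤ T.length := le_trans hℓ hlen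
  have hmemset : IsPeriodL T T.length := ⟨hTlen, le_refl _, fun i h => absurd h (by omega)⟩
  have hne : {q | IsPeriodL T q}.Nonempty := ⟨T.length, hmemset⟩
  have hmem : IsPeriodL T p := by rw [← hpdef]; exact Nat.sInf_mem hne
  obtain ⟨hp1, hpL, hperiod⟩ := hmem
  have hp4 : 4 * p ≤ T.length := le_trans hper hlen
  have hppos : 0 < p := hp1
  -- key periodicity fact
  have key : ∀ n (hn : n < T.length),
      T[n]'hn = T[n % p]'(lt_of_lt_of_le (Nat.mod_lt _ hppos) hpL) := by
    intro n
    induction n using Nat.strong_induction_on with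
    | _ n ih =>
      intro hn
      by_cases h : n < p
      · exact geq _ (Nat.mod_eq_of_lt h).symm _ _
      · push_neg at h
        have h1 : (n - p) + p < T.length := by omega
        have e1 := (hperiod (n - p) h1).symm
        have e2 : T[(n-p)+p]'h1 = T[n]'hn := geq _ (by omega) _ _
        rw [e2] at e1
        rw [e1, ih (n - p) (by omega) (by omega)]
        exact geq _ (Nat.mod_eq_sub_mod h).symm _ _
  have htk : (T.take p).length = p := by rw [List.length_take]; omega
  have hRlen : R.length = p := by rw [hR, List.length_rotate, htk]
  have hRget : ∀ m (hm : m < p),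
      R[m]'(by omega) = T[(m + k) % p]'(lt_of_lt_of_le (Nat.mod_lt _ hppos) hpL) := by
    intro m hm
    have hmr : m < ((T.take p).rotate k).length := by rw [List.length_rotate, htk]; exact hm
    rw [geq' hR (by omega) hmr, List.getElem_rotate]
    have e1 : (T.take p)[(m+k) % (T.take p).length]'(Nat.mod_lt _ (by omega))
        = (T.take p)[(m+k) % p]'(by rw [htk]; exact Nat.mod_lt _ hppos) :=
      geq _ (by rw [htk]) _ _
    rw [e1, List.getElem_take]
  -- the decomposition parameters
  obtain ⟨d, hd⟩ : ∃ d, (p - k) % p = d := ⟨_, rfl⟩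
  have hdk : d + k = 0 ∨ d + k = p := by
    rcases Nat.eq_zero_or_pos k with h0 | h0
    · left
      have h1 : (p - k) % p = 0 := by rw [h0, Nat.sub_zero, Nat.mod_self]
      omega
    · right
      have h1 : (p - k) % p = p - k := Nat.mod_eq_of_lt (by omega)
      omega
  have hdlt : d < p := by rw [← hd]; exact Nat.mod_lt _ hppos
  obtain ⟨M, hM⟩ : ∃ M, T.length - (p - d) = M := ⟨_, rfl⟩
  have hM3 : 3 * p ≤ M := by omega
  obtain ⟨j, hj⟩ : ∃ j, (M - 1) % p + 1 = j := ⟨_, rfl⟩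
  obtain ⟨a, ha⟩ : ∃ a, (M - 1) / p = a := ⟨_, rfl⟩
  have hdm := Nat.div_add_mod (M - 1) p
  rw [ha] at hdm
  have hmodlt : (M - 1) % p < p := Nat.mod_lt _ hppos
  have hcm : p * a = a * p := Nat.mul_comm p a
  have hja : a * p + j = M := by omega
  have hj1 : 1 ≤ j := by omega
  have hjp : j ≤ p := by omega
  have h2p : 2 * p ≤ M - 1 := by omega
  have ha2 : 2 ≤ a := by
    rw [← ha]; exact (Nat.le_div_iff_mul_le hppos).mpr h2p
  refine ⟨d + 1, j, a, by omega, by omega, hj1, by omega, ha2, ?_⟩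
  have hdrop : d + 1 - 1 = d := by omega
  rw [hdrop]
  -- lengths
  have hflen : (List.replicate a R).flatten.length = a * p := by rw [flat_rep_len, hRlen]
  have hflen1 : (List.replicate (a+1) R).flatten.length = (a+1) * p := by
    rw [flat_rep_len, hRlen]
  have hmul : (a + 1) * p = a * p + p := by ring
  have hlenEq : (R.drop d ++ (List.replicate a R).flatten ++ R.take j).length = T.length := by
    simp only [List.length_append, List.length_drop, List.length_take, hflen, hRlen]
    omega
  apply List.ext_getElem hlenEq.symm
  intro n hn1 hn2
  have hnlt : n < T.length := hn1
  -- rewrite RHS as a drop of a bigger concatenation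
  have hsplit0 : ((List.replicate (a+1) R).flatten ++ R.take j).drop d
      = R.drop d ++ ((List.replicate a R).flatten ++ R.take j) := by
    rw [List.replicate_succ, List.flatten_cons, List.append_assoc,
      List.drop_append_of_le_length (show d ≤ R.length by rw [hRlen]; omega)]
  have hsplit : R.drop d ++ (List.replicate a R).flatten ++ R.take j
      = ((List.replicate (a+1) R).flatten ++ R.take j).drop d := by
    rw [List.append_assoc, hsplit0]
  have hbiglen : ((List.replicate (a+1) R).flatten ++ R.take j).length = (a+1) * p + j := by
    simp only [List.length_append, hflen1, List.length_take]
    omega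
  have hdn : d + n < (a + 1) * p + j := by omega
  rw [geq' hsplit hn2 (by rw [List.length_drop, hbiglen]; omega), List.getElem_drop]
  obtain ⟨m, hmdef⟩ : ∃ m, d + n = m := ⟨_, rfl⟩
  rw [geq _ hmdef (by rw [hbiglen]; omega) (by rw [hbiglen]; omega)]
  have hmodeq : (m % p + k) % p = n % p := by
    rw [Nat.mod_add_mod]
    rcases hdk with h0 | h0
    · have : m + k = n := by omega
      rw [this]
    · have : m + k = n + p := by omega
      rw [this, Nat.add_mod_right]
  by_cases hcase : m < (a + 1) * p
  · have hflt : m < (List.replicate (a+1) R).flatten.length := by rw [hflen1]; exact hcase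
    rw [List.getElem_append_left hflt,
      flat_rep_get R (by omega) (a+1) m (by rw [hRlen]; exact hcase)]
    rw [geq R (show m % R.length = m % p by rw [hRlen]) (Nat.mod_lt _ (by omega))
      (by rw [hRlen]; exact Nat.mod_lt _ hppos)]
    rw [hRget (m % p) (Nat.mod_lt _ hppos), key n hnlt]
    exact (geq _ hmodeq _ _).symm
  · push_neg at hcase
    have hge : (List.replicate (a+1) R).flatten.length ≤ m := by rw [hflen1]; exact hcase
    rw [List.getElem_append_right hge]
    have htlt : m - (List.replicate (a+1) R).flatten.length < j := by rw [hflen1]; omega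
    have htmod : m - (List.replicate (a+1) R).flatten.length = m % p := by
      rw [hflen1]
      have hmrep : m = (m - (a+1)*p) + (a+1) * p := by omega
      conv_rhs => rw [hmrep]
      rw [Nat.add_mul_mod_self_right, Nat.mod_eq_of_lt (by omega)]
    rw [List.getElem_take]
    rw [geq _ htmod (by omega) (by rw [hRlen]; exact Nat.mod_lt _ hppos)]
    rw [hRget (m % p) (Nat.mod_lt _ hppos), key n hnlt]
    exact (geq _ hmodeq _ _).symm
end

section
/- Let R be a primitive string and α ≥ 2 an integer. If S is a string with period |R| and |S| ≥ 2|R|, then the starting positions of occurrences of S in R^α are all congruent modulo |R|, hence there are at most α of them. -/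
/-- A string is primitive if it is not a power `Q^k` (with `k ≥ 2`) of a shorter string. -/
def PrimitiveL {α : Type*} (X : List α) : Prop :=
  ¬ ∃ (Q : List α) (k : ℕ), 2 ≤ k ∧ X = (List.replicate k Q).flatten

/-- `S` occurs in `T` at (0-indexed) position `x`. -/
def occursAt {α : Type*} (S T : List α) (x : ℕ) : Prop :=
  x + S.length ≤ T.length ∧ (T.drop x).take S.length = S

instance {α : Type*} [DecidableEq α] (S T : List α) (x : ℕ) :
    Decidable (occursAt S T x) :=
  inferInstanceAs (Decidable (_ ∧ _))

lemma flatten_replicate_length {α : Type*} (Q : List α) (k : ℕ) :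
    ((List.replicate k Q).flatten).length = k * Q.length := by
  induction k with
  | zero => simp
  | succ k ih =>
    rw [List.replicate_succ, List.flatten_cons, List.length_append, ih, Nat.succ_mul]
    ring

/-- the "circular read" of a nonempty list -/
def cyc {α : Type*} (R : List α) (hR : R ≠ []) (j : ℕ) : α :=
  R[j % R.length]'(Nat.mod_lt _ (List.length_pos_iff.mpr hR))

lemma cyc_congr {α : Type*} (R : List α) (hR : R ≠ []) {j k : ℕ}
    (h : j % R.length = k % R.length) : cyc R hR j = cyc R hR k := by
  simp only [cyc]
  congr 1

lemma cyc_getElem {α : Type*} (R : List α) (hR : R ≠ []) (j : ℕ) (h : j < R.length) :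
    R[j] = cyc R hR j := by
  simp only [cyc]
  congr 1
  exact (Nat.mod_eq_of_lt h).symm

lemma flatten_replicate_getElem {α : Type*} (Q : List α) (hQ : Q ≠ []) (k j : ℕ)
    (h : j < ((List.replicate k Q).flatten).length) :
    ((List.replicate k Q).flatten)[j] = cyc Q hQ j := by
  induction k generalizing j with
  | zero => simp at h
  | succ k ih =>
    have hQpos : 0 < Q.length := List.length_pos_iff.mpr hQ
    have hlen' : ((List.replicate (k+1) Q).flatten).length
        = Q.length + ((List.replicate k Q).flatten).length := by
      rw [List.replicate_succ, List.flatten_cons, List.length_append]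
    simp only [List.replicate_succ, List.flatten_cons]
    by_cases hj : j < Q.length
    · rw [List.getElem_append_left hj]
      exact cyc_getElem Q hQ j hj
    · push_neg at hj
      have h' : j - Q.length < ((List.replicate k Q).flatten).length := by
        rw [hlen'] at h; omega
      rw [List.getElem_append_right hj, ih _ h']
      exact cyc_congr Q hQ (Nat.mod_eq_sub_mod hj).symm

/-- downward induction: a list with period `p` satisfies `L[i] = L[i % p]`. -/
lemma getElem_mod_of_period {α : Type*} (L : List α) (p : ℕ) (hp : 0 < p)
    (h : ∀ i (hi : i + p < L.length),
      L[i]'(Nat.lt_of_le_of_lt (Nat.le_add_right i p) hi) = L[i + p]'hi) :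
    ∀ i (hi : i < L.length), L[i] = L[i % p]'(Nat.lt_of_le_of_lt (Nat.mod_le i p) hi) := by
  intro i
  induction i using Nat.strong_induction_on with
  | _ i ih =>
    intro hi
    by_cases hip : i < p
    · congr 1
      exact (Nat.mod_eq_of_lt hip).symm
    · push_neg at hip
      have h1 : (i - p) + p < L.length := by omega
      have h2 := h (i - p) h1
      have h3 : i - p + p = i := by omega
      have h4 := ih (i - p) (by omega) (by omega)
      have h5 : (i - p) % p = i % p := (Nat.mod_eq_sub_mod hip).symm
      simp only [h3] at h2
      rw [← h2, h4]
      congr 1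

lemma not_primitive_of_cyclic_period {α : Type*} (R : List α) (hne : R ≠ []) (d : ℕ)
    (hd : d % R.length ≠ 0)
    (h : ∀ j, cyc R hne j = cyc R hne (j + d)) : ¬ PrimitiveL R := by
  set n := R.length with hn
  have hnpos : 0 < n := List.length_pos_iff.mpr hne
  -- iterate the cyclic period
  have hiter : ∀ m j, cyc R hne j = cyc R hne (j + m * d) := by
    intro m
    induction m with
    | zero => simp
    | succ m ih =>
      intro j
      rw [ih j, Nat.succ_mul, ← Nat.add_assoc]
      exact h (j + m * d)
  set g := Nat.gcd d n with hg
  have hgdvd : g ∣ n := Nat.gcd_dvd_right d n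
  have hgpos : 0 < g := Nat.gcd_pos_of_pos_right d hnpos
  have hgn : g < n := by
    rcases lt_or_eq_of_le (Nat.le_of_dvd hnpos hgdvd) with h' | h'
    · exact h'
    · exfalso
      apply hd
      have hdvd : n ∣ d := h' ▸ Nat.gcd_dvd_left d n
      obtain ⟨c, hc⟩ := hdvd
      simp [hc, Nat.mul_mod_right]
  -- find m with d * m % n = g
  obtain ⟨m, -, hm⟩ := Nat.exists_mul_mod_eq_gcd (n := d) (k := n) (by rw [← hg]; exact hgn)
  rw [← hg] at hm
  -- cyclic period g
  have hcycg : ∀ j, cyc R hne j = cyc R hne (j + g) := by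
    intro j
    rw [hiter m j]
    apply cyc_congr
    rw [Nat.add_mod j (m * d), Nat.mul_comm m d, hm, Nat.mod_add_mod,
      Nat.add_mod j g, Nat.mod_eq_of_lt hgn, Nat.mod_add_mod]
  -- ordinary period g
  have hperg : ∀ i (hi : i + g < n),
      R[i]'(Nat.lt_of_le_of_lt (Nat.le_add_right i g) hi) = R[i + g]'hi := by
    intro i hi
    rw [cyc_getElem R hne i (by omega), cyc_getElem R hne (i + g) hi]
    exact hcycg i
  have hmod := getElem_mod_of_period R g hgpos hperg
  apply not_not_intro
  refine ⟨R.take g, n / g, ?_, ?_⟩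
  · -- n / g ≥ 2
    have h1 : n / g * g = n := Nat.div_mul_cancel hgdvd
    by_contra hcon
    push_neg at hcon
    interval_cases h : n / g <;> omega
  · apply List.ext_getElem
    · rw [flatten_replicate_length, List.length_take]
      have : min g n = g := min_eq_left (le_of_lt hgn)
      rw [this, Nat.div_mul_cancel hgdvd]
    · intro i h1 h2
      have htne : R.take g ≠ [] := by
        intro hc
        have := congrArg List.length hc
        simp [← hn, min_eq_left (le_of_lt hgn)] at this
        omega
      rw [flatten_replicate_getElem _ htne _ _ h2]
      have hlt : (R.take g).length = g := by
        simp [← hn, min_eq_left (le_of_lt hgn)]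
      have himod : i % (R.take g).length < (R.take g).length := Nat.mod_lt _ (by rw [hlt]; exact hgpos)
      show R[i] = (R.take g)[i % (R.take g).length]'himod
      rw [List.getElem_take]
      rw [hmod i h1]
      congr 1
      rw [hlt]

/-- **Synchronization of occurrences in a power of a primitive string.** Let `R` be
primitive, `α ≥ 2`, and let `S` be a string with period `|R|` and `|S| ≥ 2|R|`. Then
all starting positions of occurrences of `S` in `R^α` are congruent modulo `|R|`;
hence there are at most `α` of them. -/
theorem occurrences_in_power_synchronized {α : Type*} [DecidableEq α]
    (R S : List α) (a : ℕ) (ha : 2 ≤ a) (hR : PrimitiveL R)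
    (hlen : 2 * R.length ≤ S.length)
    (hper : ∀ i (h : i + R.length < S.length),
      S[i]'(Nat.lt_of_le_of_lt (Nat.le_add_right i R.length) h) = S[i + R.length]'h) :
    (∀ x y, occursAt S (List.replicate a R).flatten x →
      occursAt S (List.replicate a R).flatten y → x % R.length = y % R.length) ∧
    ((Finset.range (a * R.length)).filter
        (fun x => occursAt S (List.replicate a R).flatten x)).card ≤ a := by
  have hne : R ≠ [] := by
    intro hc
    exact hR ⟨[], 2, le_refl 2, by simp [hc]⟩
  set n := R.length with hn
  have hnpos : 0 < n := List.length_pos_iff.mpr hne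
  have hnS : n ≤ S.length := le_trans (by omega) hlen
  set T := (List.replicate a R).flatten with hT
  have hTlen : T.length = a * n := flatten_replicate_length R a
  -- occurrences read off the circular string
  have occ_elem : ∀ x, occursAt S T x → ∀ i (hi : i < S.length),
      S[i] = cyc R hne (x + i) := by
    intro x hocc i hi
    obtain ⟨hx1, hx2⟩ := hocc
    have hxi : x + i < T.length := by omega
    have hd : i < (T.drop x).length := by simp; omega
    have ht : i < ((T.drop x).take S.length).length := by simp; omega
    calc S[i] = ((T.drop x).take S.length)[i]'ht := by
                simp only [hx2]
      _ = (T.drop x)[i]'hd := List.getElem_take ..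
      _ = T[x + i]'hxi := List.getElem_drop ..
      _ = cyc R hne (x + i) := flatten_replicate_getElem R hne a _ hxi
  have part1 : ∀ x y, occursAt S T x → occursAt S T y → x % n = y % n := by
    intro x y hx hy
    by_contra hxy
    set r := x % n with hr
    set r' := y % n with hr'
    have hrn : r < n := Nat.mod_lt _ hnpos
    have hrn' : r' < n := Nat.mod_lt _ hnpos
    set d := (r' + n - r) % n with hd
    have hd0 : d % n ≠ 0 := by
      rw [hd, Nat.mod_mod_of_dvd _ dvd_rfl]
      rcases le_or_gt r r' with hc | hc
      · have heq : r' + n - r = n + (r' - r) := by omega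
        rw [heq, Nat.add_mod_left, Nat.mod_eq_of_lt (by omega)]
        omega
      · rw [Nat.mod_eq_of_lt (by omega)]
        omega
    have hcyc : ∀ j, cyc R hne j = cyc R hne (j + d) := by
      intro j
      set i := (j + n - r) % n with hi
      have hiltn : i < n := Nat.mod_lt _ hnpos
      have e1 : cyc R hne (x + i) = cyc R hne j := by
        apply cyc_congr
        calc (x + i) % n = (x + (j + n - r)) % n := by rw [hi, Nat.add_mod_mod]
          _ = (x % n + (j + n - r)) % n := (Nat.mod_add_mod _ _ _).symm
          _ = (r + (j + n - r)) % n := by rw [← hr]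
          _ = (j + n) % n := by congr 1; omega
          _ = j % n := Nat.add_mod_right j n
      have e2 : cyc R hne (y + i) = cyc R hne (j + d) := by
        apply cyc_congr
        calc (y + i) % n = (y % n + i) % n := (Nat.mod_add_mod _ _ _).symm
          _ = (r' + (j + n - r) % n) % n := by rw [← hr', hi]
          _ = (r' + (j + n - r)) % n := by rw [Nat.add_mod_mod]
          _ = (j + (r' + n - r)) % n := by congr 1; omega
          _ = (j + (r' + n - r) % n) % n := (Nat.add_mod_mod _ _ _).symm
          _ = (j + d) % n := by rw [← hd]
      rw [← e1, ← e2, ← occ_elem x hx i (by omega), ← occ_elem y hy i (by omega)]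
    exact not_primitive_of_cyclic_period R hne d hd0 hcyc hR
  refine ⟨part1, ?_⟩
  set F := (Finset.range (a * n)).filter (fun x => occursAt S T x) with hF
  rcases Finset.eq_empty_or_nonempty F with hFe | ⟨x0, hx0⟩
  · rw [hFe]; simp
  · have hx0' := Finset.mem_filter.mp hx0
    calc F.card ≤ (Finset.range a).card := by
          apply Finset.card_le_card_of_injOn (fun x => x / n)
          · intro x hx
            have hx' := Finset.mem_filter.mp hx
            have := Finset.mem_range.mp hx'.1
            exact Finset.mem_range.mpr ((Nat.div_lt_iff_lt_mul hnpos).mpr (by omega))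
          · intro x hx y hy hdiv
            have hx' := Finset.mem_filter.mp hx
            have hy' := Finset.mem_filter.mp hy
            have hmodeq : x % n = y % n := part1 x y hx'.2 hy'.2
            have h1 := Nat.div_add_mod x n
            have h2 := Nat.div_add_mod y n
            simp only at hdiv
            rw [← h1, ← h2, hdiv, hmodeq]
      _ = a := Finset.card_range a
end
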